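/- For q ∈ ℂ not a root of unity of order ≤ n, the inversion formula for the (r=0, s=0 case) q-binomial-type polynomial holds: x^n = ∑_{k=0}^{n} (−1)^k [n choose k]_q q^{k(k−1)/2} · φ_k(x), where φ_k(x) = ∑_{j=0}^{k} ((q^{−k};q)_j / (q;q)_j) (q x)^j. (This is the s = r = 0 case of the general inversion formula.) -/

import Mathlib

/-!
The coefficients of `φ_k` are `(q⁻ᵏ; q)_j / (q; q)_j = (-1)ʲ [k j]_q q^{j(j-1)/2} q^{-kj}`,
so the Cauchy `q`-binomial theorem `(t; q)_k = ∑ⱼ (-1)ʲ [k j]_q q^{j(j-1)/2} tʲ` sums `φ_k`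
in closed form:
`(-1)ᵏ q^{k(k-1)/2} φ_k(x) = (x - 1)(x - q)⋯(x - q^{k-1})`. The claim thus becomes Gauss's
`q`-analogue of the Newton expansion, `xⁿ = ∑ₖ [n k]_q (x - 1)(x - q)⋯(x - q^{k-1})`.
Both expansions follow by induction from the `q`-Pascal rule; that `q` is not a root of unity of
order `≤ n` is exactly what keeps the `(q; q)_k`, `k ≤ n`, from vanishing.
-/

open Finset

/-- q-shifted factorial. -/
noncomputable def qPoch (a q : ℂ) (n : ℕ) : ℂ :=
  ∏ i ∈ Finset.range n, (1 - a * q ^ i)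

/-- Gaussian (q-binomial) coefficient. -/
noncomputable def qBinom (q : ℂ) (n k : ℕ) : ℂ :=
  qPoch q q n / (qPoch q q k * qPoch q q (n - k))

section qPoch

variable {a q : ℂ}

@[simp] lemma qPoch_zero (a q : ℂ) : qPoch a q 0 = 1 := prod_range_zero _

lemma qPoch_succ (a q : ℂ) (n : ℕ) : qPoch a q (n + 1) = qPoch a q n * (1 - a * q ^ n) :=
  prod_range_succ _ _

lemma qPoch_add (a q : ℂ) (m n : ℕ) :
    qPoch a q (m + n) = qPoch a q m * qPoch (a * q ^ m) q n := by
  simp only [qPoch, prod_range_add, pow_add, mul_assoc]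

lemma qPoch_succ' (a q : ℂ) (n : ℕ) : qPoch a q (n + 1) = (1 - a) * qPoch (a * q) q n := by
  rw [add_comm, qPoch_add, pow_one, qPoch_succ, qPoch_zero, pow_zero, mul_one, one_mul]

lemma qPoch_ne_zero_of_le {m n : ℕ} (h : qPoch a q n ≠ 0) (hmn : m ≤ n) :
    qPoch a q m ≠ 0 := by
  obtain ⟨d, rfl⟩ := Nat.exists_eq_add_of_le hmn
  exact left_ne_zero_of_mul (qPoch_add a q m d ▸ h)

lemma qPoch_self_ne_zero {n : ℕ} (h : ∀ j, 1 ≤ j → j ≤ n → q ^ j ≠ 1) :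
    qPoch q q n ≠ 0 :=
  prod_ne_zero_iff.2 fun i hi => by
    rw [← pow_succ']
    exact sub_ne_zero.2 (h (i + 1) le_add_self (mem_range.1 hi)).symm

end qPoch

section qBinom

variable {q : ℂ} {n : ℕ}

lemma qBinom_zero_right (h : qPoch q q n ≠ 0) : qBinom q n 0 = 1 := by
  rw [qBinom, qPoch_zero, one_mul, Nat.sub_zero, div_self h]

lemma qBinom_self (h : qPoch q q n ≠ 0) : qBinom q n n = 1 := by
  rw [qBinom, Nat.sub_self, qPoch_zero, mul_one, div_self h]

lemma qBinom_succ_succ (h : qPoch q q n ≠ 0) {k : ℕ} (hk : k < n) :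
    qBinom q (n + 1) (k + 1) = q ^ (k + 1) * qBinom q n (k + 1) + qBinom q n k := by
  obtain ⟨d, rfl⟩ : ∃ d, n = k + d + 1 := ⟨n - k - 1, by omega⟩
  have hk1 : qPoch q q (k + 1) ≠ 0 := qPoch_ne_zero_of_le h (by omega)
  have hd1 : qPoch q q (d + 1) ≠ 0 := qPoch_ne_zero_of_le h (by omega)
  rw [qPoch_succ] at hk1 hd1
  obtain ⟨hPk, hqk⟩ := mul_ne_zero_iff.1 hk1
  obtain ⟨hPd, hqd⟩ := mul_ne_zero_iff.1 hd1
  simp only [qBinom, Nat.add_sub_add_right, Nat.add_sub_cancel_left,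
    show k + d + 1 - k = d + 1 by omega]
  rw [qPoch_succ q q (k + d + 1), qPoch_succ q q k, qPoch_succ q q d]
  field_simp
  ring

lemma sum_qBinom_succ_mul (h : qPoch q q (n + 1) ≠ 0) (A : ℕ → ℂ) :
    ∑ k ∈ range (n + 2), qBinom q (n + 1) k * A k
      = ∑ k ∈ range (n + 1), qBinom q n k * (q ^ k * A k + A (k + 1)) := by
  have hn : qPoch q q n ≠ 0 := qPoch_ne_zero_of_le h n.le_succ
  have pascal : ∀ k ∈ range n, qBinom q (n + 1) (k + 1) * A (k + 1)
      = qBinom q n (k + 1) * (q ^ (k + 1) * A (k + 1)) + qBinom q n k * A (k + 1) := by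
    intro k hk
    rw [qBinom_succ_succ hn (mem_range.1 hk)]
    ring
  simp only [mul_add, sum_add_distrib]
  rw [sum_range_succ', sum_range_succ, sum_congr rfl pascal, sum_add_distrib,
    sum_range_succ' (fun k => qBinom q n k * (q ^ k * A k)),
    sum_range_succ (fun k => qBinom q n k * A (k + 1)),
    qBinom_zero_right h, qBinom_self h, qBinom_zero_right hn, qBinom_self hn]
  ring

end qBinom

lemma triangle_succ (j : ℕ) : (j + 1) * (j + 1 - 1) / 2 = j * (j - 1) / 2 + j := by
  simpa only [sum_range_id] using sum_range_succ (fun i => i) j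

section qBinomialTheorem

variable {q : ℂ}

theorem qPoch_eq_sum_qBinom {k : ℕ} (h : qPoch q q k ≠ 0) (t : ℂ) :
    qPoch t q k
      = ∑ j ∈ range (k + 1), (-1) ^ j * qBinom q k j * q ^ (j * (j - 1) / 2) * t ^ j := by
  induction k generalizing t with
  | zero => simp [qBinom]
  | succ k ih =>
    have step : ∀ j ∈ range (k + 1),
        qBinom q k j * (q ^ j * ((-1) ^ j * q ^ (j * (j - 1) / 2) * t ^ j)
          + (-1) ^ (j + 1) * q ^ ((j + 1) * (j + 1 - 1) / 2) * t ^ (j + 1))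
        = (1 - t) * ((-1) ^ j * qBinom q k j * q ^ (j * (j - 1) / 2) * (t * q) ^ j) := by
      intro j _
      rw [triangle_succ]
      ring
    calc qPoch t q (k + 1) = (1 - t) * qPoch (t * q) q k := qPoch_succ' t q k
      _ = ∑ j ∈ range (k + 2),
            qBinom q (k + 1) j * ((-1) ^ j * q ^ (j * (j - 1) / 2) * t ^ j) := by
        rw [sum_qBinom_succ_mul h, sum_congr rfl step, ← mul_sum,
          ih (qPoch_ne_zero_of_le h k.le_succ)]
      _ = _ := sum_congr rfl fun j _ => by ring

theorem pow_eq_sum_qBinom_mul_prod {n : ℕ} (h : qPoch q q n ≠ 0) (x : ℂ) :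
    x ^ n = ∑ k ∈ range (n + 1), qBinom q n k * ∏ m ∈ range k, (x - q ^ m) := by
  induction n with
  | zero => simp [qBinom]
  | succ n ih =>
    have step : ∀ k ∈ range (n + 1),
        qBinom q n k
            * (q ^ k * ∏ m ∈ range k, (x - q ^ m) + ∏ m ∈ range (k + 1), (x - q ^ m))
          = x * (qBinom q n k * ∏ m ∈ range k, (x - q ^ m)) := fun k _ => by
      rw [prod_range_succ]
      ring
    rw [sum_qBinom_succ_mul h, sum_congr rfl step, ← mul_sum,
      ← ih (qPoch_ne_zero_of_le h n.le_succ), pow_succ, mul_comm]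

end qBinomialTheorem

section phi

variable {q : ℂ}

lemma qPoch_inv_pow_mul_qPoch (hq0 : q ≠ 0) (j d : ℕ) :
    qPoch (q ^ (d + j))⁻¹ q j * (q ^ (d + j)) ^ j * qPoch q q d
      = (-1) ^ j * q ^ (j * (j - 1) / 2) * qPoch q q (d + j) := by
  induction j generalizing d with
  | zero => simp
  | succ j ih =>
    have hK : (q ^ (d + (j + 1)))⁻¹ * q ^ (d + (j + 1)) = 1 :=
      inv_mul_cancel₀ (pow_ne_zero _ hq0)
    have h := ih (d + 1)
    rw [show d + 1 + j = d + (j + 1) by omega, qPoch_succ q q d] at h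
    rw [qPoch_succ, triangle_succ, pow_add q (j * (j - 1) / 2), pow_succ (-1 : ℂ)]
    linear_combination (-(qPoch (q ^ (d + (j + 1)))⁻¹ q j) * (q ^ (d + (j + 1))) ^ j
      * qPoch q q d * q ^ j) * hK - q ^ j * h

lemma qPoch_inv_pow_div_qPoch (hq0 : q ≠ 0) {k j : ℕ} (h : qPoch q q k ≠ 0) (hj : j ≤ k) :
    qPoch (q ^ k)⁻¹ q j / qPoch q q j
      = (-1) ^ j * qBinom q k j * q ^ (j * (j - 1) / 2) * ((q ^ k)⁻¹) ^ j := by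
  obtain ⟨d, rfl⟩ : ∃ d, k = d + j := ⟨k - j, by omega⟩
  have hj0 : qPoch q q j ≠ 0 := qPoch_ne_zero_of_le h le_add_self
  have hd0 : qPoch q q d ≠ 0 := qPoch_ne_zero_of_le h le_self_add
  have hK : q ^ (d + j) ≠ 0 := pow_ne_zero _ hq0
  have key := qPoch_inv_pow_mul_qPoch hq0 j d
  -- keeps `field_simp` from rewriting the argument `(q ^ (d + j))⁻¹` of `qPoch`
  generalize qPoch (q ^ (d + j))⁻¹ q j = P at key ⊢
  rw [qBinom, Nat.add_sub_cancel, inv_pow]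
  field_simp
  linear_combination key

lemma neg_one_pow_mul_pow_mul_sum_qPoch_inv (hq0 : q ≠ 0) {k : ℕ} (h : qPoch q q k ≠ 0)
    (x : ℂ) :
    (-1) ^ k * q ^ (k * (k - 1) / 2)
        * ∑ j ∈ range (k + 1), qPoch (q ^ k)⁻¹ q j / qPoch q q j * (q * x) ^ j
      = ∏ m ∈ range k, (x - q ^ m) := by
  have coeff : ∀ j ∈ range (k + 1), qPoch (q ^ k)⁻¹ q j / qPoch q q j * (q * x) ^ j
      = (-1) ^ j * qBinom q k j * q ^ (j * (j - 1) / 2) * (q * x * (q ^ k)⁻¹) ^ j := by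
    intro j hj
    rw [qPoch_inv_pow_div_qPoch hq0 h (Nat.lt_succ_iff.1 (mem_range.1 hj)), mul_pow (q * x)]
    ring
  have factor : ∀ i ∈ range k,
      x - q ^ (k - 1 - i) = -1 * q ^ (k - 1 - i) * (1 - q * x * (q ^ k)⁻¹ * q ^ i) := by
    intro i hi
    have hq : q ^ (k - 1 - i) * q * q ^ i = q ^ k := by
      rw [mul_assoc, ← pow_succ', ← pow_add, show k - 1 - i + (i + 1) = k by
        have := mem_range.1 hi; omega]
    field_simp
    linear_combination -x * hq
  rw [sum_congr rfl coeff, ← qPoch_eq_sum_qBinom h, ← prod_range_reflect, prod_congr rfl factor,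
    prod_mul_distrib, prod_mul_distrib, prod_const, card_range, prod_pow_eq_pow_sum,
    sum_range_reflect (fun i => i), sum_range_id, qPoch]

end phi

/-- the `r = s = 0` inversion formula
`x^n = ∑_{k=0}^n (−1)^k [n choose k]_q q^{k(k−1)/2} φ_k(x)` with
`φ_k(x) = ∑_{j=0}^k ((q^{−k};q)_j/(q;q)_j) (qx)^j`. -/
theorem inversion_r0_s0 (q : ℂ) (n : ℕ) (hq0 : q ≠ 0)
    (hq1 : ∀ j, 1 ≤ j → j ≤ n → q ^ j ≠ 1) (x : ℂ) :
    x ^ n = ∑ k ∈ Finset.range (n + 1),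
      (-1) ^ k * qBinom q n k * q ^ (k * (k - 1) / 2) *
        (∑ j ∈ Finset.range (k + 1), qPoch ((q ^ k)⁻¹) q j / qPoch q q j * (q * x) ^ j) := by
  have h : qPoch q q n ≠ 0 := qPoch_self_ne_zero hq1
  rw [pow_eq_sum_qBinom_mul_prod h x]
  refine sum_congr rfl fun k hk => ?_
  rw [← neg_one_pow_mul_pow_mul_sum_qPoch_inv hq0
    (qPoch_ne_zero_of_le h (Nat.lt_succ_iff.1 (mem_range.1 hk))) x]
  ring
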